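/- arXiv:1509.01887 — 2 statements merged into one kernel-verified Lean document; each statement's English description precedes it below -/
import Mathlib

section
/- Let u, v be positive real numbers with u/v irrational, satisfying u+v = α and 1/u+1/v = β for positive integers α, β. Then the Ehrhart function t ↦ #{(x,y) ∈ ℤ_{≥0}² : ux+vy ≤ t} is a quasipolynomial in the positive integer t with period dividing α. -/
noncomputable def ehrhart (u v : ℝ) (t : ℕ) : ℕ :=
  {p : ℕ × ℕ | u * p.1 + v * p.2 ≤ t}.ncard

/-!
Deleting the two coordinate axes from the triangle `u x + v y ≤ t` and shifting the rest by
`(-1, -1)` leaves the triangle `u x + v y ≤ t - α`, so `E(t + α) = E(t) + ⌊s/u⌋ + ⌊s/v⌋ + 1`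
with `s = t + α`. As `s/u + s/v = β s` is an integer while `s/u` is irrational, the two floors
add up to `β s - 1`, hence `E(t + α) = E(t) + β (t + α)`. Summing this recurrence along a
residue class modulo `α` gives a quadratic polynomial in `t` on that class.
-/

open Set Polynomial

theorem Set.encard_eq_axes_add_shift (S : Set (ℕ × ℕ)) :
    S.encard = {y | (0, y) ∈ S}.encard + {x | (x + 1, 0) ∈ S}.encard
      + {p : ℕ × ℕ | (p.1 + 1, p.2 + 1) ∈ S}.encard := by
  have hsplit : S = Prod.mk 0 '' {y | (0, y) ∈ S} ∪ (fun x => (x + 1, 0)) '' {x | (x + 1, 0) ∈ S}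
      ∪ (fun p : ℕ × ℕ => (p.1 + 1, p.2 + 1)) '' {p | (p.1 + 1, p.2 + 1) ∈ S} := by
    ext ⟨_ | x, _ | y⟩ <;> simp
  have hinj_axis : (fun x : ℕ => (x + 1, 0)).Injective := fun x y h => by simpa using h
  have hinj_shift : (fun p : ℕ × ℕ => (p.1 + 1, p.2 + 1)).Injective := fun p q h => by
    simpa [Prod.ext_iff] using h
  conv_lhs => rw [hsplit]
  rw [encard_union_eq, encard_union_eq, (Prod.mk_right_injective 0).encard_image,
    hinj_axis.encard_image, hinj_shift.encard_image]
  · rw [disjoint_left]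
    rintro _ ⟨y, -, rfl⟩ ⟨x, -, h⟩
    simp at h
  · rw [disjoint_left]
    rintro _ (⟨y, -, rfl⟩ | ⟨x, -, rfl⟩) ⟨p, -, h⟩ <;> simp at h

def latticeTriangle (u v s : ℝ) : Set (ℕ × ℕ) := {p | u * p.1 + v * p.2 ≤ s}

section
variable {u v : ℝ}

theorem finite_latticeTriangle (hu : 0 < u) (hv : 0 < v) (s : ℝ) :
    (latticeTriangle u v s).Finite := by
  refine ((finite_Iic ⌊s / u⌋₊).prod (finite_Iic ⌊s / v⌋₊)).subset fun p hp => ?_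
  have hp : u * p.1 + v * p.2 ≤ s := hp
  have hx : u * p.1 ≤ s := by linarith [mul_nonneg hv.le (Nat.cast_nonneg (α := ℝ) p.2)]
  have hy : v * p.2 ≤ s := by linarith [mul_nonneg hu.le (Nat.cast_nonneg (α := ℝ) p.1)]
  exact ⟨Nat.le_floor ((le_div_iff₀' hu).2 hx), Nat.le_floor ((le_div_iff₀' hv).2 hy)⟩

theorem setOf_zero_mem_latticeTriangle (hv : 0 < v) {s : ℝ} (hs : 0 ≤ s) :
    {y | (0, y) ∈ latticeTriangle u v s} = Iic ⌊s / v⌋₊ := by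
  ext y
  simp [latticeTriangle, Nat.le_floor_iff (div_nonneg hs hv.le), le_div_iff₀' hv]

theorem setOf_succ_zero_mem_latticeTriangle (hu : 0 < u) (s : ℝ) :
    {x | (x + 1, 0) ∈ latticeTriangle u v s} = Iio ⌊s / u⌋₊ := by
  ext x
  simp [latticeTriangle, ← Nat.succ_le_iff, Nat.le_floor_iff' x.succ_ne_zero, le_div_iff₀' hu]

theorem setOf_succ_succ_mem_latticeTriangle (s : ℝ) :
    {p : ℕ × ℕ | (p.1 + 1, p.2 + 1) ∈ latticeTriangle u v s} =
      latticeTriangle u v (s - (u + v)) := by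
  ext p
  simp only [latticeTriangle, mem_ofPred_eq, Nat.cast_add, Nat.cast_one]
  constructor <;> intro h <;> linarith

theorem encard_latticeTriangle (hu : 0 < u) (hv : 0 < v) {s : ℝ} (hs : 0 ≤ s) :
    (latticeTriangle u v s).encard =
      (latticeTriangle u v (s - (u + v))).encard + (⌊s / u⌋₊ + ⌊s / v⌋₊ + 1 : ℕ) := by
  rw [encard_eq_axes_add_shift, setOf_zero_mem_latticeTriangle hv hs,
    setOf_succ_zero_mem_latticeTriangle hu, setOf_succ_succ_mem_latticeTriangle]
  simp only [← Finset.coe_Iic, ← Finset.coe_Iio, encard_coe_eq_coe_finsetCard, Nat.card_Iic,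
    Nat.card_Iio]
  push_cast
  ring

theorem ehrhart_add {α : ℕ} (hu : 0 < u) (hv : 0 < v) (hsum : u + v = α) (t : ℕ) :
    ehrhart u v (t + α) = ehrhart u v t + (⌊(t + α : ℕ) / u⌋₊ + ⌊(t + α : ℕ) / v⌋₊ + 1) := by
  have hcast (s : ℝ) : ((latticeTriangle u v s).ncard : ℕ∞) = (latticeTriangle u v s).encard :=
    (finite_latticeTriangle hu hv s).cast_ncard_eq
  have h := encard_latticeTriangle hu hv (Nat.cast_nonneg (α := ℝ) (t + α))
  rw [← hcast, ← hcast, hsum, Nat.cast_add, add_sub_cancel_right] at h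
  exact_mod_cast h

end

theorem Nat.floor_add_floor_add_one_of_irrational {x y : ℝ} (hx : 0 ≤ x) (hy : 0 ≤ y)
    (hirr : Irrational x) {n : ℕ} (hxy : x + y = n) : ⌊x⌋₊ + ⌊y⌋₊ + 1 = n := by
  have hirr' : Irrational y := by
    rw [eq_sub_of_add_eq' hxy]; exact hirr.natCast_sub n
  have hx₁ : (⌊x⌋₊ : ℝ) < x := (Nat.floor_le hx).lt_of_ne (hirr.ne_nat _).symm
  have hy₁ : (⌊y⌋₊ : ℝ) < y := (Nat.floor_le hy).lt_of_ne (hirr'.ne_nat _).symm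
  have hx₂ := Nat.lt_floor_add_one x
  have hy₂ := Nat.lt_floor_add_one y
  have hlt : ⌊x⌋₊ + ⌊y⌋₊ < n := by exact_mod_cast (by linarith : (⌊x⌋₊ + ⌊y⌋₊ : ℝ) < n)
  have hgt : n < ⌊x⌋₊ + ⌊y⌋₊ + 2 := by
    exact_mod_cast (by linarith : (n : ℝ) < ⌊x⌋₊ + ⌊y⌋₊ + 2)
  omega

theorem ehrhart_add_of_irrational {u v : ℝ} {α β : ℕ} (hu : 0 < u) (hv : 0 < v)
    (hirr : Irrational u) (hsum : u + v = α) (hinv : 1 / u + 1 / v = β) (t : ℕ) :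
    ehrhart u v (t + α) = ehrhart u v t + β * (t + α) := by
  have hα : α ≠ 0 := by rintro rfl; rw [Nat.cast_zero] at hsum; linarith
  have hxy : ((t + α : ℕ) : ℝ) / u + (t + α : ℕ) / v = (β * (t + α) : ℕ) := by
    rw [Nat.cast_mul, ← hinv]; ring
  rw [ehrhart_add hu hv hsum, Nat.floor_add_floor_add_one_of_irrational (by positivity)
    (by positivity) (hirr.natCast_div (by omega)) hxy]

theorem exists_eval_mod_of_add_eq {f : ℕ → ℚ} {c : ℕ} (hc : c ≠ 0) (b : ℚ)
    (h : ∀ t, f (t + c) = f t + b * (t + c)) :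
    ∃ p : ℕ → ℚ[X], ∀ t, f t = (p (t % c)).eval (t : ℚ) := by
  have hq (r q : ℕ) : f (r + q * c) = f r + b * (q * r + c * q * (q + 1) / 2) := by
    induction q with
    | zero => simp
    | succ q ih =>
      rw [add_mul, one_mul, ← add_assoc, h, ih]; push_cast; ring
  refine ⟨fun r => C (f r) + C (b / (2 * c)) * (X - C (r : ℚ)) * (X + C (r : ℚ) + C (c : ℚ)),
    fun t => ?_⟩
  have ht : (t : ℚ) = (t % c : ℕ) + (t / c : ℕ) * c := mod_cast (Nat.mod_add_div' t c).symm
  have hc' : (c : ℚ) ≠ 0 := mod_cast hc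
  conv_lhs => rw [← Nat.mod_add_div' t c, hq]
  simp only [eval_add, eval_mul, eval_sub, eval_C, eval_X]
  rw [ht]
  field_simp
  ring

theorem stmt_1_general (u v : ℝ) (hu : 0 < u) (hv : 0 < v) (hirr : Irrational (u / v))
    (α β : ℕ) (hα : 0 < α)
    (hsum : u + v = α) (hinv : 1 / u + 1 / v = β) :
    ∃ p : ℕ → Polynomial ℚ,
      ∀ t : ℕ, 0 < t → (ehrhart u v t : ℚ) = (p (t % α)).eval (t : ℚ) := by
  have hirr_v : Irrational v := by
    have h : u / v + (1 : ℕ) = α / v := by rw [← hsum, Nat.cast_one]; field_simp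
    exact .of_natCast_div α (h ▸ hirr.add_natCast 1)
  have hirr_u : Irrational u := by
    rw [eq_sub_of_add_eq hsum]; exact hirr_v.natCast_sub α
  obtain ⟨p, hp⟩ := exists_eval_mod_of_add_eq (f := fun t => (ehrhart u v t : ℚ)) hα.ne' β
    fun t => by simp only [ehrhart_add_of_irrational hu hv hirr_u hsum hinv t]; push_cast; ring
  exact ⟨p, fun t _ => hp t⟩

/-- The Ehrhart function of an admissible irrational triangle is a
quasipolynomial with period dividing `α`. -/
theorem stmt_1 (u v : ℝ) (hu : 0 < u) (hv : 0 < v) (hirr : Irrational (u / v))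
    (α β : ℕ) (hα : 0 < α) (hβ : 0 < β)
    (hsum : u + v = α) (hinv : 1 / u + 1 / v = β) :
    ∃ p : ℕ → Polynomial ℚ,
      ∀ t : ℕ, 0 < t → (ehrhart u v t : ℚ) = (p (t % α)).eval (t : ℚ) :=
  stmt_1_general u v hu hv hirr α β hα hsum hinv
end

section
/- Let u, v be positive reals with u/v irrational, u+v = α ∈ ℤ_{>0} and 1/u+1/v = β ∈ ℤ_{>0}. If the Ehrhart function of T_{u,v} is a polynomial in t (pseudo-integral), then either α = 1, or (α,β) = (3,3), or (α,β) = (2,4). -/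
open Polynomial

theorem Irrational.natFloor_add_natFloor_add_one {a b : ℝ} (ha : 0 ≤ a) (hb : 0 ≤ b)
    (hirr : Irrational a) {n : ℕ} (h : a + b = n) : ⌊a⌋₊ + ⌊b⌋₊ + 1 = n := by
  have hirr_b : Irrational b := by
    convert hirr.natCast_sub n using 1
    linarith
  have ha_lt : (⌊a⌋₊ : ℝ) < a := (Nat.floor_le ha).lt_of_ne (hirr.ne_nat _).symm
  have hb_lt : (⌊b⌋₊ : ℝ) < b := (Nat.floor_le hb).lt_of_ne (hirr_b.ne_nat _).symm
  have hlow : ⌊a⌋₊ + ⌊b⌋₊ < n := by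
    exact_mod_cast (show (⌊a⌋₊ + ⌊b⌋₊ : ℝ) < n by linarith)
  have hhigh : n < ⌊a⌋₊ + ⌊b⌋₊ + 2 := by
    exact_mod_cast (show (n : ℝ) < ⌊a⌋₊ + ⌊b⌋₊ + 2 by
      linarith [Nat.lt_floor_add_one a, Nat.lt_floor_add_one b])
  omega

theorem Polynomial.eq_C_of_eval_add_mul_eq {R : Type*} [CommRing R] [IsDomain R] [CharZero R]
    {p : R[X]} {a c : R} (hc : c ≠ 0)
    (h : ∀ n : ℕ, p.eval (a + (n + 1) * c) = p.eval (a + n * c)) : p = C (p.eval a) := by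
  have hconst : ∀ n : ℕ, p.eval (a + n * c) = p.eval a := by
    intro n
    induction n with
    | zero => simp
    | succ n ih => rw [Nat.cast_succ, h, ih]
  have hinj : Function.Injective fun n : ℕ => a + n * c := fun m n hmn =>
    Nat.cast_injective (mul_right_cancel₀ hc (add_left_cancel hmn))
  refine sub_eq_zero.1 (eq_zero_of_infinite_isRoot _
    ((Set.infinite_range_of_injective hinj).mono ?_))
  rintro _ ⟨n, rfl⟩
  simp [hconst]

theorem exists_eq_quadratic_of_add_eq {f : ℕ → ℕ} {a b : ℕ} (ha : a ≠ 0)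
    (hf : ∀ t, f (t + a) = f t + (t + a) * b) {P : ℚ[X]}
    (hP : ∀ t, 0 < t → (f t : ℚ) = P.eval (t : ℚ)) :
    ∃ c : ℚ, ∀ t, 0 < t → (f t : ℚ) = b * t * (t + a) / (2 * a) + c := by
  have ha' : (a : ℚ) ≠ 0 := by exact_mod_cast ha
  set Q := P - C ((b : ℚ) / (2 * a)) * X * (X + C (a : ℚ))
  have hQ : ∀ x, Q.eval x = P.eval x - b * x * (x + a) / (2 * a) := by
    intro x
    simp only [Q, eval_sub, eval_mul, eval_C, eval_X, eval_add]
    ring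
  -- `b x (x + a) / (2a)` has the same jumps `(x + a) b` over a period as `f`, so `Q` is periodic
  have hper : ∀ n : ℕ, Q.eval (1 + (n + 1) * (a : ℚ)) = Q.eval (1 + n * (a : ℚ)) := by
    intro n
    have hshift := hf (1 + n * a)
    have h1 := hP (1 + n * a) (by omega)
    have h2 := hP (1 + n * a + a) (by omega)
    rw [hshift] at h2
    push_cast at h1 h2
    rw [hQ, hQ, show (1 + (n + 1) * a : ℚ) = 1 + n * a + a by ring, ← h2, ← h1]
    field_simp
    ring
  refine ⟨Q.eval 1, fun t ht => ?_⟩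
  have hQt := hQ t
  rw [Polynomial.eq_C_of_eval_add_mul_eq (p := Q) ha' hper, eval_C] at hQt
  rw [hP t ht]
  linarith

noncomputable def latticeCount (u v s : ℝ) : ℕ :=
  {p : ℕ × ℕ | u * p.1 + v * p.2 ≤ s}.ncard

theorem ehrhart_eq_latticeCount (u v : ℝ) (t : ℕ) : ehrhart u v t = latticeCount u v t := rfl

section latticeCount

variable {u v : ℝ}

theorem latticeCount_comm (u v s : ℝ) : latticeCount u v s = latticeCount v u s := by
  have hswap : {p : ℕ × ℕ | v * p.1 + u * p.2 ≤ s} =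
      Prod.swap '' {p : ℕ × ℕ | u * p.1 + v * p.2 ≤ s} := by
    rw [Set.image_swap_eq_preimage_swap]
    ext p
    simp [add_comm]
  rw [latticeCount, latticeCount, hswap, Set.ncard_image_of_injective _ Prod.swap_injective]

theorem finite_setOf_latticePoint (hu : 0 < u) (hv : 0 < v) (s : ℝ) :
    {p : ℕ × ℕ | u * p.1 + v * p.2 ≤ s}.Finite := by
  refine ((Set.finite_Iic ⌊s / u⌋₊).prod (Set.finite_Iic ⌊s / v⌋₊)).subset ?_
  rintro ⟨x, y⟩ (h : u * x + v * y ≤ s)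
  have hx : 0 ≤ u * x := by positivity
  have hy : 0 ≤ v * y := by positivity
  exact ⟨Nat.le_floor ((le_div_iff₀' hu).2 (by linarith)),
    Nat.le_floor ((le_div_iff₀' hv).2 (by linarith))⟩

-- `⌊s / u + 1⌋₊` rather than `⌊s / u⌋₊ + 1`, so that the count is also right for `s < 0`.
theorem setOf_mul_le_eq_Iio (hu : 0 < u) (s : ℝ) :
    {x : ℕ | u * x ≤ s} = Set.Iio ⌊s / u + 1⌋₊ := by
  ext x
  rw [Set.mem_Iio, Nat.lt_iff_add_one_le, Nat.le_floor_iff' (Nat.succ_ne_zero x),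
    Nat.cast_succ, add_le_add_iff_right, le_div_iff₀' hu]
  rfl

theorem latticeCount_of_neg (hu : 0 ≤ u) (hv : 0 ≤ v) {s : ℝ} (hs : s < 0) :
    latticeCount u v s = 0 := by
  have hempty : {p : ℕ × ℕ | u * p.1 + v * p.2 ≤ s} = ∅ := by
    refine Set.eq_empty_iff_forall_notMem.2 fun p (h : u * p.1 + v * p.2 ≤ s) => ?_
    have : 0 ≤ u * p.1 + v * p.2 := by positivity
    linarith
  rw [latticeCount, hempty, Set.ncard_empty]

theorem latticeCount_eq_add_sub (hu : 0 < u) (hv : 0 < v) (s : ℝ) :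
    latticeCount u v s = ⌊s / u + 1⌋₊ + latticeCount u v (s - v) := by
  have hsplit : {p : ℕ × ℕ | u * p.1 + v * p.2 ≤ s} =
      (fun x => (x, 0)) '' {x : ℕ | u * x ≤ s} ∪
        (fun p => (p.1, p.2 + 1)) '' {p : ℕ × ℕ | u * p.1 + v * p.2 ≤ s - v} := by
    ext ⟨x, _ | y⟩
    · simp
    · simp only [Set.mem_ofPred_eq, Set.mem_union, Set.mem_image, Prod.mk.injEq, Prod.exists]
      push_cast
      simp only [and_true, and_false, false_or]
      constructor <;> intro h <;> linarith
  have hdisj : Disjoint ((fun x => (x, 0)) '' {x : ℕ | u * x ≤ s})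
      ((fun p => (p.1, p.2 + 1)) '' {p : ℕ × ℕ | u * p.1 + v * p.2 ≤ s - v}) := by
    rw [Set.disjoint_left]
    rintro _ ⟨x, _, rfl⟩ ⟨p, _, hp⟩
    simp [Prod.ext_iff] at hp
  have hrow := setOf_mul_le_eq_Iio hu s
  rw [latticeCount, hsplit, Set.ncard_union_eq hdisj (hrow ▸ (Set.finite_Iio _).image _)
    ((finite_setOf_latticePoint hu hv _).image _), Set.ncard_image_of_injective,
    Set.ncard_image_of_injective, hrow, Set.ncard_Iio_nat, latticeCount]
  · exact fun p q h => by simpa [Prod.ext_iff] using h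
  · exact fun x y h => by simpa using h

theorem latticeCount_eq_floor_add (hu : 0 < u) (hv : 0 < v) (s : ℝ) :
    latticeCount u v s = ⌊s / u + 1⌋₊ + ⌊s / v⌋₊ + latticeCount u v (s - (u + v)) := by
  rw [latticeCount_eq_add_sub hu hv, latticeCount_comm, latticeCount_eq_add_sub hv hu,
    latticeCount_comm, sub_div, div_self hv.ne', sub_add_cancel, sub_sub, add_comm v u, add_assoc]

theorem latticeCount_zero (hu : 0 < u) (hv : 0 < v) : latticeCount u v 0 = 1 := by
  rw [latticeCount_eq_floor_add hu hv, latticeCount_of_neg hu.le hv.le (by linarith)]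
  simp

end latticeCount

section ehrhart

variable {u v : ℝ} {α β : ℕ}

theorem latticeCount_natCast (hu : 0 < u) (hv : 0 < v) (hirr : Irrational u)
    (hsum : u + v = α) (hinv : 1 / u + 1 / v = β) {t : ℕ} (ht : t ≠ 0) :
    latticeCount u v t = t * β + latticeCount u v (t - α) := by
  have hfloor : ⌊(t : ℝ) / u⌋₊ + ⌊(t : ℝ) / v⌋₊ + 1 = t * β :=
    (hirr.natCast_div ht).natFloor_add_natFloor_add_one (by positivity) (by positivity)
      (by rw [Nat.cast_mul, ← hinv]; ring)
  rw [latticeCount_eq_floor_add hu hv, hsum, Nat.floor_add_one (by positivity), ← hfloor]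
  ring

theorem ehrhart_of_lt (hu : 0 < u) (hv : 0 < v) (hirr : Irrational u)
    (hsum : u + v = α) (hinv : 1 / u + 1 / v = β) {t : ℕ} (ht : 0 < t) (htα : t < α) :
    ehrhart u v t = t * β := by
  rw [ehrhart_eq_latticeCount, latticeCount_natCast hu hv hirr hsum hinv ht.ne',
    latticeCount_of_neg hu.le hv.le (sub_neg.2 (by exact_mod_cast htα)), add_zero]

theorem ehrhart_self (hu : 0 < u) (hv : 0 < v) (hirr : Irrational u)
    (hsum : u + v = α) (hinv : 1 / u + 1 / v = β) : ehrhart u v α = α * β + 1 := by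
  have hα : 0 < α := by exact_mod_cast hsum ▸ add_pos hu hv
  rw [ehrhart_eq_latticeCount, latticeCount_natCast hu hv hirr hsum hinv hα.ne', sub_self,
    latticeCount_zero hu hv]

theorem ehrhart_add_self (hu : 0 < u) (hv : 0 < v) (hirr : Irrational u)
    (hsum : u + v = α) (hinv : 1 / u + 1 / v = β) (t : ℕ) :
    ehrhart u v (t + α) = ehrhart u v t + (t + α) * β := by
  have hα : 0 < α := by exact_mod_cast hsum ▸ add_pos hu hv
  rw [ehrhart_eq_latticeCount, ehrhart_eq_latticeCount,
    latticeCount_natCast hu hv hirr hsum hinv (by omega), Nat.cast_add, add_sub_cancel_right]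
  ring

end ehrhart

/-- If an admissible irrational triangle is pseudo-integral then `α = 1` or
`(α,β) ∈ {(3,3),(2,4)}`. -/
theorem stmt_4 (u v : ℝ) (hu : 0 < u) (hv : 0 < v) (hirr : Irrational (u / v))
    (α β : ℕ) (hα : 0 < α) (hβ : 0 < β)
    (hsum : u + v = α) (hinv : 1 / u + 1 / v = β)
    (hpoly : ∃ P : Polynomial ℚ, ∀ t : ℕ, 0 < t →
      (ehrhart u v t : ℚ) = P.eval (t : ℚ)) :
    α = 1 ∨ (α = 3 ∧ β = 3) ∨ (α = 2 ∧ β = 4) := by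
  obtain ⟨P, hP⟩ := hpoly
  have hirr_u : Irrational u := hirr.div_cases.elim id fun hirr_v => by
    convert hirr_v.natCast_sub α using 1
    linarith
  obtain ⟨c, hc⟩ := exists_eq_quadratic_of_add_eq hα.ne'
    (ehrhart_add_self hu hv hirr_u hsum hinv) hP
  have hstep : ∀ t, 0 < t →
      2 * α * ehrhart u v (t + 1) = 2 * α * ehrhart u v t + β * (2 * t + 1 + α) := by
    intro t ht
    have hα' : (α : ℚ) ≠ 0 := by exact_mod_cast hα.ne'
    qify
    rw [hc t ht, hc (t + 1) (by omega)]
    field_simp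
    push_cast
    ring
  have hlt := fun t => ehrhart_of_lt (t := t) hu hv hirr_u hsum hinv
  have hself := ehrhart_self hu hv hirr_u hsum hinv
  rcases (by omega : α = 1 ∨ α = 2 ∨ α = 3 ∨ 4 ≤ α) with h | rfl | rfl | h
  · exact Or.inl h
  · have h1 := hstep 1 one_pos
    rw [hlt 1 one_pos (by norm_num), hself] at h1
    omega
  · have h2 := hstep 2 two_pos
    rw [hlt 2 two_pos (by norm_num), hself] at h2
    omega
  · have h1 := hstep 1 one_pos
    rw [hlt 1 one_pos (by omega), hlt 2 two_pos (by omega)] at h1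
    have h3 : α * β = 3 * β := by linarith
    exact absurd (Nat.eq_of_mul_eq_mul_right hβ h3) (by omega)
end
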